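/- Inheritance property of SEP-POMDPs. Assume: (P(a)) Ṽ is as given (nonempty and closed under pointwise convergence); (B(a)) for every v̄ ∈ Ṽ and every y' ∈ Y, the function (s, a) ↦ h_{y'}(s, a, v̄) belongs to F̃; (B(b)) for every f ∈ F̃, the function s ↦ min_{a ∈ 𝒜 s} f(s, a) belongs to Ṽ; (B(c)) for every f ∈ F̃ there exists π̃ ∈ Π̃ such that min_{a ∈ 𝒜 s} f(s, a) = f(s, π̃ s) for all s ∈ S. Then the unique bounded fixed point v* of H satisfies v*(·, b) ∈ Ṽ for every b ∈ B, and for every b ∈ B there exists π*_b ∈ Π̃ such that v*(s, b) = Σ_{y'} σ(y' | b) * h_{y'}(s, π*_b s, v*(·, λ(y', b))) for all s ∈ S. -/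

import Mathlib

/-! Start value iteration from a belief-independent `v̄₀ ∈ Ṽ`. Since `σ(· | b)` is a probability
vector, the minimand of `H` is a nonnegative combination of a nonempty family of the functions of
B(a), hence lies in the cone `F̃`, and B(b) shows that `H` preserves "`v(·, b) ∈ Ṽ` for every `b`".
As `H` is a `β`-contraction in the sup norm, the iterates converge pointwise to `v*`, and `Ṽ`
being closed passes the property to the limit. B(c) applied to the minimand for `v*` gives the
structured policy. -/

open Finset

/-- The belief simplex over the modulation space `M`. -/
abbrev Belief (M : Type) [Fintype M] : Type :=
  {b : M → ℝ // (∀ μ, 0 ≤ b μ) ∧ ∑ μ, b μ = 1}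

/-- A finite SEP-POMDP: feasible action sets, cost function, state transition
probabilities, modulation/observation probabilities, and a discount factor. -/
structure SEP (S Y M A : Type) [Fintype S] [Fintype Y] [Fintype M] [Fintype A] where
  act : S → Finset A
  act_ne : ∀ s, (act s).Nonempty
  c : S → Y → A → ℝ
  p : Y → S → A → S → ℝ
  p_nonneg : ∀ y' s a s', 0 ≤ p y' s a s'
  p_sum : ∀ y' s a, ∑ s', p y' s a s' = 1
  Q : M → Y → M → ℝ
  Q_nonneg : ∀ μ y' μ', 0 ≤ Q μ y' μ'
  Q_sum : ∀ μ, ∑ y', ∑ μ', Q μ y' μ' = 1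
  β : ℝ
  β_nonneg : 0 ≤ β
  β_lt_one : β < 1

namespace SEP

variable {S Y M A : Type} [Fintype S] [Fintype Y] [Fintype M] [Fintype A]

/-- `σ(y' | b) = ∑ μ, ∑ μ', b μ * Q μ y' μ'`. -/
def sig (P : SEP S Y M A) (b : Belief M) (y' : Y) : ℝ :=
  ∑ μ, ∑ μ', b.1 μ * P.Q μ y' μ'

/-- The Bayesian belief update `λ(y', b)`. -/
noncomputable def lam (P : SEP S Y M A) (y' : Y) (b : Belief M) : Belief M :=
  if h : 0 < P.sig b y' then
    ⟨fun μ' => (∑ μ, b.1 μ * P.Q μ y' μ') / P.sig b y',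
      fun μ' => div_nonneg (Finset.sum_nonneg fun μ _ =>
        mul_nonneg (b.2.1 μ) (P.Q_nonneg μ y' μ')) h.le,
      by
        rw [← Finset.sum_div, Finset.sum_comm]
        exact div_self (ne_of_gt h)⟩
  else b

/-- `h_{y'}(s, a, v̄) = c s y' a + β * ∑ s', p y' s a s' * v̄ s'`. -/
def hy (P : SEP S Y M A) (y' : Y) (s : S) (a : A) (vb : S → ℝ) : ℝ :=
  P.c s y' a + P.β * ∑ s', P.p y' s a s' * vb s'

/-- The Bellman operator `H` of the SEP-POMDP. -/
noncomputable def H (P : SEP S Y M A) (v : S → Belief M → ℝ) (s : S) (b : Belief M) : ℝ :=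
  (P.act s).inf' (P.act_ne s) fun a =>
    ∑ y', P.sig b y' * P.hy y' s a fun s' => v s' (P.lam y' b)

/-- Boundedness of a function `v : S × B → ℝ`. -/
def Bdd (v : S → Belief M → ℝ) : Prop :=
  ∃ C, ∀ s b, |v s b| ≤ C

end SEP

open Filter Topology

section WeightedSums

variable {ι : Type*}

theorem sum_mul_mem_of_cone {X : Type*} {F : Set (X → ℝ)}
    (hadd : ∀ f ∈ F, ∀ g ∈ F, (fun x => f x + g x) ∈ F)
    (hsmul : ∀ f ∈ F, ∀ t : ℝ, 0 ≤ t → (fun x => t * f x) ∈ F)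
    {s : Finset ι} (hs : s.Nonempty) {w : ι → ℝ} (hw : ∀ i ∈ s, 0 ≤ w i)
    {f : ι → X → ℝ} (hf : ∀ i ∈ s, f i ∈ F) :
    (fun x => ∑ i ∈ s, w i * f i x) ∈ F := by
  induction hs using Finset.Nonempty.cons_induction with
  | singleton i =>
    simpa using hsmul _ (hf i (mem_singleton_self i)) _ (hw i (mem_singleton_self i))
  | cons i s hi _ ih =>
    simp only [sum_cons]
    exact hadd _ (hsmul _ (hf i (mem_cons_self i s)) _ (hw i (mem_cons_self i s))) _
      (ih (fun j hj => hw j (mem_cons_of_mem hj)) fun j hj => hf j (mem_cons_of_mem hj))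

theorem abs_sum_mul_sub_sum_mul_le {s : Finset ι} {w : ι → ℝ} (hw : ∀ i ∈ s, 0 ≤ w i)
    (hw₁ : ∑ i ∈ s, w i = 1) {f g : ι → ℝ} {C : ℝ} (h : ∀ i ∈ s, |f i - g i| ≤ C) :
    |∑ i ∈ s, w i * f i - ∑ i ∈ s, w i * g i| ≤ C :=
  calc |∑ i ∈ s, w i * f i - ∑ i ∈ s, w i * g i|
      = |∑ i ∈ s, w i * (f i - g i)| := by simp only [mul_sub, sum_sub_distrib]
    _ ≤ ∑ i ∈ s, |w i * (f i - g i)| := abs_sum_le_sum_abs _ _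
    _ ≤ ∑ i ∈ s, w i * C := sum_le_sum fun i hi => by
      rw [abs_mul, abs_of_nonneg (hw i hi)]
      exact mul_le_mul_of_nonneg_left (h i hi) (hw i hi)
    _ = C := by rw [← sum_mul, hw₁, one_mul]

theorem abs_inf'_sub_inf'_le {s : Finset ι} (hs : s.Nonempty) {f g : ι → ℝ} {C : ℝ}
    (h : ∀ i ∈ s, |f i - g i| ≤ C) : |s.inf' hs f - s.inf' hs g| ≤ C := by
  rw [abs_sub_le_iff, sub_le_comm, sub_le_comm (a := s.inf' hs g)]
  constructor
  · exact le_inf' hs _ fun i hi => by linarith [inf'_le f hi, (abs_sub_le_iff.1 (h i hi)).1]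
  · exact le_inf' hs _ fun i hi => by linarith [inf'_le g hi, (abs_sub_le_iff.1 (h i hi)).2]

end WeightedSums

namespace SEP

variable {S Y M A : Type} [Fintype S] [Fintype Y] [Fintype M] [Fintype A] (P : SEP S Y M A)

theorem sig_nonneg (b : Belief M) (y' : Y) : 0 ≤ P.sig b y' :=
  sum_nonneg fun μ _ => sum_nonneg fun μ' _ => mul_nonneg (b.2.1 μ) (P.Q_nonneg μ y' μ')

theorem sum_sig (b : Belief M) : ∑ y', P.sig b y' = 1 := by
  rw [← b.2.2]
  simp only [sig]
  rw [sum_comm]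
  simp only [← mul_sum, P.Q_sum, mul_one]

noncomputable def qFactor (v : S → Belief M → ℝ) (b : Belief M) (x : S × A) : ℝ :=
  ∑ y', P.sig b y' * P.hy y' x.1 x.2 fun s' => v s' (P.lam y' b)

theorem H_eq_inf'_qFactor (v : S → Belief M → ℝ) (s : S) (b : Belief M) :
    P.H v s b = (P.act s).inf' (P.act_ne s) fun a => P.qFactor v b (s, a) :=
  rfl

theorem abs_hy_sub_hy_le {u u' : S → ℝ} {C : ℝ} (h : ∀ s', |u s' - u' s'| ≤ C)
    (y' : Y) (s : S) (a : A) : |P.hy y' s a u - P.hy y' s a u'| ≤ P.β * C := by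
  rw [hy, hy, add_sub_add_left_eq_sub, ← mul_sub, abs_mul, abs_of_nonneg P.β_nonneg]
  exact mul_le_mul_of_nonneg_left (abs_sum_mul_sub_sum_mul_le (fun s' _ => P.p_nonneg y' s a s')
    (P.p_sum y' s a) fun s' _ => h s') P.β_nonneg

theorem abs_H_sub_H_le {v w : S → Belief M → ℝ} {C : ℝ} (h : ∀ s b, |v s b - w s b| ≤ C)
    (s : S) (b : Belief M) : |P.H v s b - P.H w s b| ≤ P.β * C :=
  abs_inf'_sub_inf'_le _ fun a _ => abs_sum_mul_sub_sum_mul_le (fun y' _ => P.sig_nonneg b y')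
    (P.sum_sig b) fun y' _ => P.abs_hy_sub_hy_le (fun s' => h s' _) y' s a

theorem abs_iterate_H_sub_le {v w : S → Belief M → ℝ} (hw : ∀ s b, w s b = P.H w s b) {C : ℝ}
    (h : ∀ s b, |v s b - w s b| ≤ C) (n : ℕ) (s : S) (b : Belief M) :
    |(P.H^[n] v) s b - w s b| ≤ P.β ^ n * C := by
  induction n generalizing s b with
  | zero => simpa using h s b
  | succ n ih =>
    rw [Function.iterate_succ_apply', hw s b, pow_succ', mul_assoc]
    exact P.abs_H_sub_H_le ih s b

theorem tendsto_iterate_H {v w : S → Belief M → ℝ} (hw : ∀ s b, w s b = P.H w s b)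
    (hbdd : ∃ C, ∀ s b, |v s b - w s b| ≤ C) (s : S) (b : Belief M) :
    Tendsto (fun n => (P.H^[n] v) s b) atTop (𝓝 (w s b)) := by
  obtain ⟨C, hC⟩ := hbdd
  have hgeo : Tendsto (fun n => P.β ^ n * C) atTop (𝓝 0) := by
    simpa using (tendsto_pow_atTop_nhds_zero_of_lt_one P.β_nonneg P.β_lt_one).mul_const C
  exact tendsto_iff_norm_sub_tendsto_zero.2 <|
    squeeze_zero (fun n => norm_nonneg _) (fun n => P.abs_iterate_H_sub_le hw hC n s b) hgeo

section Inheritance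

variable {Vt : Set (S → ℝ)} {Ft : Set (S × A → ℝ)}
  (hFadd : ∀ f ∈ Ft, ∀ g ∈ Ft, (fun x => f x + g x) ∈ Ft)
  (hFsmul : ∀ f ∈ Ft, ∀ t : ℝ, 0 ≤ t → (fun x => t * f x) ∈ Ft)
  (hBa : ∀ vb ∈ Vt, ∀ y' : Y, (fun x : S × A => P.hy y' x.1 x.2 vb) ∈ Ft)
include hFadd hFsmul hBa

theorem qFactor_mem {v : S → Belief M → ℝ} {b : Belief M}
    (hv : ∀ y', (fun s => v s (P.lam y' b)) ∈ Vt) : P.qFactor v b ∈ Ft :=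
  sum_mul_mem_of_cone hFadd hFsmul
    ((exists_ne_zero_of_sum_ne_zero (P.sum_sig b ▸ one_ne_zero)).imp fun _ => And.left)
    (fun y' _ => P.sig_nonneg b y') fun y' _ => hBa _ (hv y') y'

theorem iterate_H_mem
    (hBb : ∀ f ∈ Ft, (fun s => (P.act s).inf' (P.act_ne s) fun a => f (s, a)) ∈ Vt)
    {v : S → Belief M → ℝ} (hv : ∀ b, (fun s => v s b) ∈ Vt) (n : ℕ) (b : Belief M) :
    (fun s => (P.H^[n] v) s b) ∈ Vt := by
  induction n generalizing b with
  | zero => exact hv b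
  | succ n ih =>
    simp only [Function.iterate_succ_apply', H_eq_inf'_qFactor]
    exact hBb _ (P.qFactor_mem hFadd hFsmul hBa fun y' => ih _)

end Inheritance

end SEP

theorem sep_pomdp_inheritance_general {S Y M A : Type} [Fintype S] [Fintype Y] [Fintype M] [Fintype A]
    (P : SEP S Y M A)
    (Vt : Set (S → ℝ)) (hVne : Vt.Nonempty) (hVclosed : IsClosed Vt)
    (Pt : Set (S → A))
    -- F̃ is a convex cone of functions on S × A
    (Ft : Set (S × A → ℝ))
    (hFadd : ∀ f ∈ Ft, ∀ g ∈ Ft, (fun x => f x + g x) ∈ Ft)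
    (hFsmul : ∀ f ∈ Ft, ∀ t : ℝ, 0 ≤ t → (fun x => t * f x) ∈ Ft)
    -- B(a)
    (hBa : ∀ vb ∈ Vt, ∀ y' : Y, (fun x : S × A => P.hy y' x.1 x.2 vb) ∈ Ft)
    -- B(b)
    (hBb : ∀ f ∈ Ft,
      (fun s => (P.act s).inf' (P.act_ne s) fun a => f (s, a)) ∈ Vt)
    -- B(c)
    (hBc : ∀ f ∈ Ft, ∃ π ∈ Pt, ∀ s,
      ((P.act s).inf' (P.act_ne s) fun a => f (s, a)) = f (s, π s))
    -- the unique bounded fixed point of H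
    (vstar : S → Belief M → ℝ) (hbdd : SEP.Bdd vstar)
    (hfix : ∀ s b, vstar s b = P.H vstar s b) :
    (∀ b, (fun s => vstar s b) ∈ Vt) ∧
    ∀ b : Belief M, ∃ π ∈ Pt, ∀ s,
      vstar s b = ∑ y', P.sig b y' * P.hy y' s (π s) fun s' => vstar s' (P.lam y' b) := by
  obtain ⟨v₀, hv₀⟩ := hVne
  have hlim : ∀ s b, Tendsto (fun n => (P.H^[n] fun s _ => v₀ s) s b) atTop
      (𝓝 (vstar s b)) := by
    obtain ⟨C, hC⟩ := hbdd
    obtain ⟨C₀, hC₀⟩ := Finite.exists_le fun s => |v₀ s|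
    exact P.tendsto_iterate_H hfix
      ⟨C₀ + C, fun s b => (abs_sub _ _).trans (add_le_add (hC₀ s) (hC s b))⟩
  have hstar : ∀ b, (fun s => vstar s b) ∈ Vt := fun b =>
    hVclosed.mem_of_tendsto (tendsto_pi_nhds.2 fun s => hlim s b) <|
      Eventually.of_forall fun n =>
        P.iterate_H_mem hFadd hFsmul hBa hBb (fun _ => hv₀) n b
  refine ⟨hstar, fun b => ?_⟩
  obtain ⟨π, hπ, hmin⟩ := hBc _ (P.qFactor_mem hFadd hFsmul hBa fun y' => hstar (P.lam y' b))
  exact ⟨π, hπ, fun s => (hfix s b).trans <| (P.H_eq_inf'_qFactor vstar s b).trans (hmin s)⟩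

/-- **Inheritance property of SEP-POMDPs.** Under P(a), B(a), B(b) and B(c)
(with `Ft` a convex cone of structured functions on `S × A`), the unique
bounded fixed point `vstar` of `H` is structured in `s` for every belief,
and for every belief there is a structured policy attaining the minimum. -/
theorem sep_pomdp_inheritance {S Y M A : Type} [Fintype S] [Fintype Y] [Fintype M] [Fintype A]
    [Nonempty S] [Nonempty Y] [Nonempty M] [Nonempty A]
    (P : SEP S Y M A)
    (Vt : Set (S → ℝ)) (hVne : Vt.Nonempty) (hVclosed : IsClosed Vt)
    (Pt : Set (S → A)) (hPt : ∀ π ∈ Pt, ∀ s, π s ∈ P.act s)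
    -- F̃ is a convex cone of functions on S × A
    (Ft : Set (S × A → ℝ))
    (hFadd : ∀ f ∈ Ft, ∀ g ∈ Ft, (fun x => f x + g x) ∈ Ft)
    (hFsmul : ∀ f ∈ Ft, ∀ t : ℝ, 0 ≤ t → (fun x => t * f x) ∈ Ft)
    -- B(a)
    (hBa : ∀ vb ∈ Vt, ∀ y' : Y, (fun x : S × A => P.hy y' x.1 x.2 vb) ∈ Ft)
    -- B(b)
    (hBb : ∀ f ∈ Ft,
      (fun s => (P.act s).inf' (P.act_ne s) fun a => f (s, a)) ∈ Vt)
    -- B(c)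
    (hBc : ∀ f ∈ Ft, ∃ π ∈ Pt, ∀ s,
      ((P.act s).inf' (P.act_ne s) fun a => f (s, a)) = f (s, π s))
    -- the unique bounded fixed point of H
    (vstar : S → Belief M → ℝ) (hbdd : SEP.Bdd vstar)
    (hfix : ∀ s b, vstar s b = P.H vstar s b) :
    (∀ b, (fun s => vstar s b) ∈ Vt) ∧
    ∀ b : Belief M, ∃ π ∈ Pt, ∀ s,
      vstar s b = ∑ y', P.sig b y' * P.hy y' s (π s) fun s' => vstar s' (P.lam y' b) :=
  sep_pomdp_inheritance_general P Vt hVne hVclosed Pt Ft hFadd hFsmul hBa hBb hBc vstar hbdd hfix
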